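/- For every n ≥ 1, every integer in {0, 1, …, n} \ {⌊n/2⌋} is an eigenvalue of the adjacency matrix of the burnt pancake graph BP_n. -/

import Mathlib

/-- The set `±[n] = {-n, …, -1, 1, …, n}` as a subtype of `ℤ`. -/
def PM (n : ℕ) : Type := {x : ℤ // x ≠ 0 ∧ x.natAbs ≤ n}

instance (n : ℕ) : DecidableEq (PM n) := fun _ _ =>
  decidable_of_iff _ Subtype.ext_iff.symm

instance (n : ℕ) : Finite (PM n) :=
  Set.Finite.to_subtype (s := {x : ℤ | x ≠ 0 ∧ x.natAbs ≤ n})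
    (Set.Finite.subset (Set.finite_Icc (-(n : ℤ)) n)
      (fun x hx => by simp only [Set.mem_setOf_eq] at hx; simp only [Set.mem_Icc]; omega))

noncomputable instance (n : ℕ) : Fintype (PM n) := Fintype.ofFinite _

/-- Negation on `±[n]`. -/
def negPM (n : ℕ) (x : PM n) : PM n :=
  ⟨-x.1, by have hx := x.2; constructor <;> omega⟩

/-- The `i`-th signed prefix reversal `r_i = (1,-i)(2,-(i-1))⋯(i,-1)` as a
function on `ℤ`: it sends `x` with `1 ≤ x ≤ i` to `-(i+1-x)`, sends `x` with
`-i ≤ x ≤ -1` to `i+1+x`, and fixes every other `x`. -/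
def rfun (i x : ℤ) : ℤ :=
  if 1 ≤ x ∧ x ≤ i then x - i - 1 else if -i ≤ x ∧ x ≤ -1 then x + i + 1 else x

lemma rfun_invol (i : ℤ) : Function.Involutive (rfun i) := by
  intro x; unfold rfun; split_ifs <;> omega

/-- The signed prefix reversal `r_{i+1}` (for `i : Fin n`, so that the
one-based index `i+1` ranges over `1, …, n`) as a map `±[n] → ±[n]`. -/
def rMap (n : ℕ) (i : Fin n) (x : PM n) : PM n :=
  ⟨rfun ((i : ℕ) + 1) x.1, by
    have hx := x.2; have hi := i.2; unfold rfun; split_ifs <;> constructor <;> omega⟩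

/-- The signed prefix reversal `r_{i+1}` as a permutation of `±[n]`. -/
def rPerm (n : ℕ) (i : Fin n) : Equiv.Perm (PM n) :=
  Function.Involutive.toPerm (rMap n i)
    (by intro x; apply Subtype.ext; exact rfun_invol _ x.1)

/-- The hyperoctahedral group `B_n`, realized as the subgroup of permutations
`σ` of `±[n]` satisfying `σ(-x) = -σ(x)`. -/
def Bgroup (n : ℕ) : Subgroup (Equiv.Perm (PM n)) where
  carrier := {σ | ∀ x, σ (negPM n x) = negPM n (σ x)}
  one_mem' := fun _ => rfl
  mul_mem' := by
    intro a b ha hb x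
    simp only [Equiv.Perm.mul_apply, hb x, ha (b x)]
  inv_mem' := by
    intro a ha x
    have h := ha (a⁻¹ x)
    rw [show a (a⁻¹ x) = x from a.apply_symm_apply x] at h
    rw [← h, show ∀ y, a⁻¹ (a y) = y from a.symm_apply_apply]

lemma rPerm_mem (n : ℕ) (i : Fin n) : rPerm n i ∈ Bgroup n := by
  intro x
  apply Subtype.ext
  show rfun ((i : ℕ) + 1) (-x.1) = -(rfun ((i : ℕ) + 1) x.1)
  have hx := x.2
  unfold rfun
  split_ifs <;> omega

/-- The signed prefix reversal `r_{i+1}` as an element of `B_n`. -/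
def rElem (n : ℕ) (i : Fin n) : ↥(Bgroup n) := ⟨rPerm n i, rPerm_mem n i⟩

lemma rElem_mul_self (n : ℕ) (i : Fin n) : rElem n i * rElem n i = 1 := by
  apply Subtype.ext
  apply Equiv.ext
  intro x
  apply Subtype.ext
  exact rfun_invol _ x.1

/-- The burnt pancake graph `BP_n`: the Cayley graph of `B_n` with respect to
the signed prefix reversals `r_1, …, r_n`. -/
def BP (n : ℕ) : SimpleGraph ↥(Bgroup n) where
  Adj σ τ := σ ≠ τ ∧ ∃ i : Fin n, τ = σ * rElem n i
  symm := ⟨by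
    rintro σ τ ⟨hne, i, rfl⟩
    exact ⟨hne.symm, i, by rw [mul_assoc, rElem_mul_self, mul_one]⟩⟩
  loopless := ⟨fun σ h => h.1 rfl⟩

instance (n : ℕ) : Finite ↥(Bgroup n) := Subtype.finite

noncomputable instance (n : ℕ) : Fintype ↥(Bgroup n) := Fintype.ofFinite _

noncomputable instance (n : ℕ) (v : ↥(Bgroup n)) : Fintype ((BP n).neighborSet v) :=
  Fintype.ofFinite _

/-!
Fix a pancake `p₀` and let `f σ = g |σ⁻¹ p₀|` depend only on the position of `p₀` in `σ`.
Flipping a prefix of length `i` leaves a position `p > i` alone and sends `p ≤ i` to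
`i + 1 - p`, so the adjacency operator of `BP_n` maps `f` to the function of the same kind
built from `positionQuotient n g p = (p - 1) g p + ∑_{t ≤ n + 1 - p} g t`. Every eigenvector
`g` of this `n × n` quotient thus lifts to an eigenvector of `BP_n`, and step functions provide
eigenvectors of `Q` with eigenvalue `m`: for `n < 2m`, `g = -1` on `(n - m, m]` and
`g (m + 1) = 2m - n`; for `2m + 2 ≤ n`, `g (m + 1) = 2m + 1 - n` and `g = 1` on `[m + 2, n - m]`.
-/

open Finset
open scoped Matrix

lemma natAbs_rfun (k : ℕ) {x : ℤ} (hx : x ≠ 0) :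
    (rfun (k + 1) x).natAbs = if k + 1 < x.natAbs then x.natAbs else k + 2 - x.natAbs := by
  unfold rfun; split_ifs <;> omega

lemma rfun_one (k : ℕ) : rfun (k + 1) 1 = -(k + 1) := by
  unfold rfun; split_ifs <;> omega

lemma rElem_inv (n : ℕ) (i : Fin n) : (rElem n i)⁻¹ = rElem n i :=
  inv_eq_of_mul_eq_one_right (rElem_mul_self n i)

lemma rElem_injective (n : ℕ) : Function.Injective (rElem n) := by
  intro i j h
  have := congrArg (fun σ : Bgroup n => ((σ : Equiv.Perm (PM n)) ⟨1, one_ne_zero, i.pos⟩).1) h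
  change rfun ((i : ℕ) + 1) 1 = rfun ((j : ℕ) + 1) 1 at this
  rw [rfun_one, rfun_one] at this
  omega

lemma rElem_ne_one (n : ℕ) (i : Fin n) : rElem n i ≠ 1 := by
  intro h
  have := congrArg (fun σ : Bgroup n => ((σ : Equiv.Perm (PM n)) ⟨1, one_ne_zero, i.pos⟩).1) h
  change rfun ((i : ℕ) + 1) 1 = 1 at this
  rw [rfun_one] at this
  omega

open scoped Classical in
lemma BP_adjMatrix_mulVec_apply {R : Type*} [NonAssocSemiring R] (n : ℕ) (f : Bgroup n → R)
    (σ : Bgroup n) : ((BP n).adjMatrix R *ᵥ f) σ = ∑ i, f (σ * rElem n i) := by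
  rw [SimpleGraph.adjMatrix_mulVec_apply]
  refine Eq.trans ?_
    (sum_map univ ⟨(σ * rElem n ·), (mul_right_injective σ).comp (rElem_injective n)⟩ f)
  congr 1
  ext τ
  simp only [SimpleGraph.mem_neighborFinset, mem_map, mem_univ, true_and,
    Function.Embedding.coeFn_mk]
  constructor
  · rintro ⟨-, i, rfl⟩
    exact ⟨i, rfl⟩
  · rintro ⟨i, rfl⟩
    exact ⟨fun h => rElem_ne_one n i (mul_eq_left.1 h.symm), i, rfl⟩

lemma coe_mul_rElem_inv_apply (n : ℕ) (σ : Bgroup n) (i : Fin n) (x : PM n) :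
    (((σ * rElem n i : Bgroup n) : Equiv.Perm (PM n))⁻¹ x).1 =
      rfun ((i : ℕ) + 1) (((σ : Equiv.Perm (PM n))⁻¹ x).1) := by
  rw [Subgroup.coe_mul, mul_inv_rev, Equiv.Perm.mul_apply, ← Subgroup.coe_inv, rElem_inv]
  rfl

def positionQuotient {M : Type*} [AddCommMonoid M] (n : ℕ) (g : ℕ → M) (p : ℕ) : M :=
  (p - 1) • g p + ∑ t ∈ range (n + 1 - p), g (t + 1)

lemma sum_range_natAbs_rfun {M : Type*} [AddCommMonoid M] (g : ℕ → M) {n : ℕ} {x : ℤ}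
    (hx : x ≠ 0) (hxn : x.natAbs ≤ n) :
    ∑ i ∈ range n, g (rfun (i + 1) x).natAbs = positionQuotient n g x.natAbs := by
  set p := x.natAbs
  rw [positionQuotient, ← sum_range_add_sum_Ico _ (by omega : p - 1 ≤ n), sum_Ico_eq_sum_range,
    show n - (p - 1) = n + 1 - p by omega]
  congr 1
  · rw [sum_congr rfl fun i hi => by rw [natAbs_rfun i hx, if_pos (by simp at hi; omega)],
      sum_const, card_range]
  · refine sum_congr rfl fun t _ => ?_
    rw [natAbs_rfun _ hx, if_neg (by omega)]
    congr 1
    omega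

open scoped Classical in
theorem BP_hasEigenvalue_of_positionQuotient {n : ℕ} {g : ℕ → ℝ} {μ : ℝ}
    (hg : ∀ p, 1 ≤ p → p ≤ n → positionQuotient n g p = μ * g p)
    {p₀ : ℕ} (hp₀ : 1 ≤ p₀) (hp₀n : p₀ ≤ n) (hg₀ : g p₀ ≠ 0) :
    Module.End.HasEigenvalue (Matrix.toLin' ((BP n).adjMatrix ℝ)) μ := by
  let x₀ : PM n := ⟨p₀, by omega, by omega⟩
  let f : Bgroup n → ℝ := fun σ => g (((σ : Equiv.Perm (PM n))⁻¹ x₀).1.natAbs)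
  refine Module.End.hasEigenvalue_of_hasEigenvector (x := f)
    (Module.End.hasEigenvector_iff.2 ⟨?_, fun h => hg₀ (congrFun h 1)⟩)
  rw [Module.End.mem_eigenspace_iff, Matrix.toLin'_apply]
  funext σ
  obtain ⟨hy0, hyn⟩ := ((σ : Equiv.Perm (PM n))⁻¹ x₀).2
  rw [BP_adjMatrix_mulVec_apply]
  simp only [f, coe_mul_rElem_inv_apply]
  rw [Fin.sum_univ_eq_sum_range (fun i => g (rfun ((i : ℕ) + 1) _).natAbs),
    sum_range_natAbs_rfun g hy0 hyn, hg _ (by omega) hyn]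
  rfl

lemma Int.cast_positionQuotient {R : Type*} [Ring R] (n : ℕ) (g : ℕ → ℤ) (p : ℕ) :
    ((positionQuotient n g p : ℤ) : R) = positionQuotient n (fun j => (g j : R)) p := by
  simp only [positionQuotient, Int.cast_add, Int.cast_sum, nsmul_eq_mul, Int.cast_mul,
    Int.cast_natCast]

def profileAbove (n m j : ℕ) : ℤ :=
  if n < j + m ∧ j ≤ m then -1 else if j = m + 1 then 2 * m - n else 0

lemma sum_range_profileAbove {n m : ℕ} (hm : m ≤ n) (hnm : n + 1 ≤ 2 * m) (k : ℕ) :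
    ∑ t ∈ range k, profileAbove n m (t + 1) =
      if k + m ≤ n then 0 else if k ≤ m then (n - m - k : ℤ) else 0 := by
  induction k with
  | zero => simp only [range_zero, sum_empty]; split_ifs <;> omega
  | succ k ih =>
    rw [sum_range_succ, ih]
    unfold profileAbove
    split_ifs <;> omega

lemma positionQuotient_profileAbove {n m : ℕ} (hm : m ≤ n) (hnm : n + 1 ≤ 2 * m) {p : ℕ}
    (hp : 1 ≤ p) (hpn : p ≤ n) :
    positionQuotient n (profileAbove n m) p = m * profileAbove n m p := by
  obtain ⟨q, rfl⟩ := Nat.exists_eq_add_of_le' hp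
  rw [positionQuotient, Nat.add_sub_cancel, Nat.add_sub_add_right, sum_range_profileAbove hm hnm,
    nsmul_eq_mul]
  unfold profileAbove
  -- once `q = m` is substituted, the nonlinear products are the same atoms on both sides
  rcases eq_or_ne q m with rfl | _ <;> split_ifs <;> omega

def profileBelow (n m j : ℕ) : ℤ :=
  if j = m + 1 then 2 * m + 1 - n else if m + 2 ≤ j ∧ j + m ≤ n then 1 else 0

lemma sum_range_profileBelow {n m : ℕ} (hnm : 2 * m + 2 ≤ n) (k : ℕ) :
    ∑ t ∈ range k, profileBelow n m (t + 1) =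
      if k ≤ m then 0 else if k + m ≤ n then (k + m - n : ℤ) else 0 := by
  induction k with
  | zero => simp
  | succ k ih =>
    rw [sum_range_succ, ih]
    unfold profileBelow
    split_ifs <;> omega

lemma positionQuotient_profileBelow {n m : ℕ} (hnm : 2 * m + 2 ≤ n) {p : ℕ}
    (hp : 1 ≤ p) (hpn : p ≤ n) :
    positionQuotient n (profileBelow n m) p = m * profileBelow n m p := by
  obtain ⟨q, rfl⟩ := Nat.exists_eq_add_of_le' hp
  rw [positionQuotient, Nat.add_sub_cancel, Nat.add_sub_add_right, sum_range_profileBelow hnm,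
    nsmul_eq_mul]
  unfold profileBelow
  rcases eq_or_ne q m with rfl | _ <;> split_ifs <;> omega

open scoped Classical in
theorem BP_integer_eigenvalues_general (n : ℕ) (m : ℕ) (hm : m ≤ n)
    (hne : m ≠ n / 2) :
    Module.End.HasEigenvalue (Matrix.toLin' ((BP n).adjMatrix ℝ)) (m : ℝ) := by
  rcases (by omega : n + 1 ≤ 2 * m ∨ 2 * m + 2 ≤ n) with h | h
  · refine BP_hasEigenvalue_of_positionQuotient (g := fun j => (profileAbove n m j : ℝ))
      (fun p hp hpn => ?_) (p₀ := m) (by omega) hm ?_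
    · rw [← Int.cast_positionQuotient, positionQuotient_profileAbove hm h hp hpn]
      push_cast; rfl
    · rw [profileAbove, if_pos (by omega)]
      norm_num
  · refine BP_hasEigenvalue_of_positionQuotient (g := fun j => (profileBelow n m j : ℝ))
      (fun p hp hpn => ?_) (p₀ := n - m) (by omega) (by omega) ?_
    · rw [← Int.cast_positionQuotient, positionQuotient_profileBelow h hp hpn]
      push_cast; rfl
    · rw [profileBelow, if_neg (by omega), if_pos (by omega)]
      norm_num

open scoped Classical in
/-- For every `n ≥ 1`, every integer in
`{0, 1, …, n} \ {⌊n/2⌋}` is an eigenvalue of the adjacency matrix of the burnt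
pancake graph `BP_n`. -/
theorem BP_integer_eigenvalues (n : ℕ) (hn : 1 ≤ n) (m : ℕ) (hm : m ≤ n)
    (hne : m ≠ n / 2) :
    Module.End.HasEigenvalue (Matrix.toLin' ((BP n).adjMatrix ℝ)) (m : ℝ) :=
  BP_integer_eigenvalues_general n m hm hne
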